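/- Let T be a pruned tree of sequences and ξ a free inductive probability measure on T (⨅_{n ∈ ℕ} ξ(x↾n) = 0 for every x ∈ lim T). Define f_ξ : lim T → [0,1] by f_ξ(x) := ⨆_{n ∈ ℕ} a_{x↾n}. Then: (i) f_ξ is continuous; (ii) [0,1) ⊆ range f_ξ; and (iii) the restriction of f_ξ to the set lim T ∖ f_ξ⁻¹(Q_ξ) is a homeomorphism onto [0,1] ∖ Q_ξ. -/

import Mathlib

open scoped ENNReal
open MeasureTheory

noncomputable section

/-- A tree of sequences: a nonempty set of finite lists of naturals closed under prefixes. -/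
def IsTree (T : Set (List ℕ)) : Prop :=
  T.Nonempty ∧ ∀ s t : List ℕ, s <+: t → t ∈ T → s ∈ T

/-- `t` is a maximal node of `T`: it has no successor in `T`. -/
def IsMaxNode (T : Set (List ℕ)) (t : List ℕ) : Prop :=
  ∀ k : ℕ, t ++ [k] ∉ T

/-- A probability tree on `T`. -/
def IsProbTree (T : Set (List ℕ)) (p : List ℕ → ℕ → ℝ≥0∞) : Prop :=
  ∀ t ∈ T, ¬ IsMaxNode T t →
    (∀ k : ℕ, t ++ [k] ∉ T → p t k = 0) ∧ (∑' k : ℕ, p t k = 1)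

/-- The measure induced by a probability tree: `Ξ_p(t) = ∏_{i<|t|} p (t↾i) (t i)`. -/
def Xi (p : List ℕ → ℕ → ℝ≥0∞) (t : List ℕ) : ℝ≥0∞ :=
  ∏ i ∈ Finset.range t.length, p (t.take i) (t.getD i 0)

/-- An inductive probability measure on `T`. -/
def IsIPM (T : Set (List ℕ)) (ξ : List ℕ → ℝ≥0∞) : Prop :=
  ξ [] = 1 ∧ ∀ t ∈ T, ¬ IsMaxNode T t →
    ξ t = ∑' k : {k : ℕ // t ++ [k] ∈ T}, ξ (t ++ [k.1])

/-- The set of infinite branches of `T`. -/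
def limT (T : Set (List ℕ)) : Set (ℕ → ℕ) :=
  {x | ∀ n : ℕ, (List.range n).map x ∈ T}

/-- `T` is pruned: every node has a successor in `T`. -/
def Pruned (T : Set (List ℕ)) : Prop := ∀ t ∈ T, ∃ k : ℕ, t ++ [k] ∈ T

/-- The basic clopen set `[t]` of branches through `t`. -/
def cyl (T : Set (List ℕ)) (t : List ℕ) : Set ↥(limT T) :=
  {x | (List.range t.length).map x.1 = t}

/-- `ξ` is free: all branches have measure (infimum) zero. -/
def FreeIPM (T : Set (List ℕ)) (ξ : List ℕ → ℝ≥0∞) : Prop :=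
  ∀ x ∈ limT T, (⨅ n : ℕ, ξ ((List.range n).map x)) = 0

/-- Lexicographic order for lists (of equal length): they first differ at some
index `i < |s|` where `s` is smaller. -/
def lexLt (s t : List ℕ) : Prop :=
  ∃ i : ℕ, i < s.length ∧ s.take i = t.take i ∧ s.getD i 0 < t.getD i 0

/-- The left endpoint `a_t` of the interval associated to `t`. -/
def aT (T : Set (List ℕ)) (ξ : List ℕ → ℝ≥0∞) (t : List ℕ) : ℝ :=
  (∑' s : {s : List ℕ // s ∈ T ∧ s.length = t.length ∧ lexLt s t}, ξ s.1).toReal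

/-- The right endpoint `b_t = a_t + ξ(t)`. -/
def bT (T : Set (List ℕ)) (ξ : List ℕ → ℝ≥0∞) (t : List ℕ) : ℝ :=
  aT T ξ t + (ξ t).toReal

/-- The set of endpoints `Q_ξ`. -/
def Qxi (T : Set (List ℕ)) (ξ : List ℕ → ℝ≥0∞) : Set ℝ :=
  {y | ∃ t ∈ T, y = aT T ξ t} ∪ {y | ∃ t ∈ T, y = bT T ξ t}

/-- The map `f_ξ : lim T → [0,1]`, `x ↦ sup_n a_{x↾n}`. -/
def fXi (T : Set (List ℕ)) (ξ : List ℕ → ℝ≥0∞) (x : ↥(limT T)) : ℝ :=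
  ⨆ n : ℕ, aT T ξ ((List.range n).map x.1)

/-!
Every node `t` owns the interval `[a_t, b_t]` of length `ξ(t)`, and since
`a_{t ++ [k]} = a_t + ∑_{j<k} ξ(t ++ [j])`, the children of `t` cut it into consecutive
subintervals, in increasing order of `k`. Along a branch `x` the intervals `[a_{x↾n}, b_{x↾n}]`
are nested and, by freeness, shrink to the point `f_ξ(x)`. Branches sharing their first `n`
values are thus mapped `ξ(x↾n)`-close, which is continuity, and following the subintervals that
contain a given `y < 1` builds a branch mapped to `y`. A value off `Q_ξ` lies in the open interval
`(a_{x↾n}, b_{x↾n})` for every `n`, and only branches through `x↾n` are mapped into it: this gives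
injectivity off `f_ξ⁻¹(Q_ξ)` and continuity of the inverse.
-/

open Set Filter Topology

local notation:max x " ↾ " n:max => List.map x (List.range n)

variable {T : Set (List ℕ)} {ξ : List ℕ → ℝ≥0∞}

lemma map_range_succ (x : ℕ → ℕ) (n : ℕ) : x ↾ (n + 1) = x ↾ n ++ [x n] := by
  simp [List.range_succ]

lemma apply_eq_of_map_range_eq {x z : ℕ → ℕ} {m n : ℕ} (h : z ↾ n = x ↾ n) (hm : m < n) :
    z m = x m := by
  simpa [hm] using congrArg (·[m]?) h

lemma exists_forall_map_range_of_forall_exists_append {P : List ℕ → Prop} (h0 : P [])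
    (hstep : ∀ t, P t → ∃ k, P (t ++ [k])) : ∃ x : ℕ → ℕ, ∀ n, P (x ↾ n) := by
  choose! next hnext using hstep
  let path : ℕ → List ℕ := fun n => Nat.rec [] (fun _ t => t ++ [next t]) n
  have hpath : ∀ n, P (path n) := fun n => Nat.rec h0 (fun _ ih => hnext _ ih) n
  refine ⟨fun n => next (path n), fun n => ?_⟩
  suffices (fun n => next (path n)) ↾ n = path n from this ▸ hpath n
  induction n with
  | zero => rfl
  | succ n ih => rw [map_range_succ, ih]

lemma lexLt_irrefl (t : List ℕ) : ¬ lexLt t t := by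
  rintro ⟨i, -, -, hlt⟩
  exact lt_irrefl _ hlt

lemma lexLt_append_iff {s t : List ℕ} (h : s.length = t.length) (j k : ℕ) :
    lexLt (s ++ [j]) (t ++ [k]) ↔ lexLt s t ∨ (s = t ∧ j < k) := by
  unfold lexLt
  rw [List.length_append, List.length_singleton, Nat.exists_lt_succ_right]
  refine or_congr (exists_congr fun i => and_congr_right fun hi => ?_) ?_
  · rw [List.take_append_of_le_length hi.le, List.take_append_of_le_length (h ▸ hi.le),
      List.getD_append _ _ _ _ hi, List.getD_append _ _ _ _ (h ▸ hi)]
  · simp [h]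

lemma tsum_eq_tsum_tsum_append_singleton {α : Type*} (f : List α → ℝ≥0∞) (hf : f [] = 0) :
    ∑' s, f s = ∑' u, ∑' a, f (u ++ [a]) := by
  have hsnoc : Function.Injective fun p : List α × α => p.1 ++ [p.2] := fun p q hpq => by
    obtain ⟨h1, h2⟩ := List.append_inj' hpq rfl
    exact Prod.ext h1 (List.singleton_inj.1 h2)
  have hsupp : f.support ⊆ range fun p : List α × α => p.1 ++ [p.2] := by
    intro s hs
    have hne : s ≠ [] := by rintro rfl; exact hs hf
    exact ⟨(s.dropLast, s.getLast hne), List.dropLast_append_getLast hne⟩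
  rw [← hsnoc.tsum_eq hsupp]
  exact ENNReal.tsum_prod (f := fun u a => f (u ++ [a]))

lemma IsTree.nil_mem (hT : IsTree T) : [] ∈ T := by
  obtain ⟨t, ht⟩ := hT.1
  exact hT.2 [] t List.nil_prefix ht

lemma IsTree.mem_of_append_mem (hT : IsTree T) {t : List ℕ} {k : ℕ} (h : t ++ [k] ∈ T) :
    t ∈ T :=
  hT.2 t _ (List.prefix_append _ _) h

lemma eventually_map_range_eq (x : limT T) (n : ℕ) : ∀ᶠ z in 𝓝 x, z.1 ↾ n = x.1 ↾ n := by
  have hcoord : ∀ i, ∀ᶠ z in 𝓝 x, z.1 i = x.1 i := fun i =>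
    tendsto_pure.1 (nhds_discrete ℕ ▸
      ((continuous_apply i).comp continuous_subtype_val).tendsto x)
  filter_upwards [(Finset.range n).eventually_all.2 fun i _ => hcoord i] with z hz
  exact List.map_congr_left fun i hi => hz i (by simpa using hi)

lemma continuousAt_of_eventually_map_range_eq {X : Type*} [TopologicalSpace X]
    {g : X → limT T} {r : X} (hg : ∀ n, ∀ᶠ r' in 𝓝 r, (g r').1 ↾ n = (g r).1 ↾ n) :
    ContinuousAt g r := by
  rw [IsInducing.subtypeVal.continuousAt_iff]
  refine continuousAt_pi.2 fun m =>
    ContinuousAt.congr (f := fun _ => (g r).1 m) continuousAt_const ?_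
  filter_upwards [hg (m + 1)] with r' hr'
  exact (apply_eq_of_map_range_eq hr' m.lt_succ_self).symm

structure IsPrunedIPM (T : Set (List ℕ)) (ξ : List ℕ → ℝ≥0∞) : Prop where
  isTree : IsTree T
  pruned : Pruned T
  isIPM : IsIPM T ξ

open Classical in
def childMass (T : Set (List ℕ)) (ξ : List ℕ → ℝ≥0∞) (t : List ℕ) (k : ℕ) : ℝ≥0∞ :=
  if t ++ [k] ∈ T then ξ (t ++ [k]) else 0

def leftMass (T : Set (List ℕ)) (ξ : List ℕ → ℝ≥0∞) (t : List ℕ) (k : ℕ) : ℝ≥0∞ :=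
  ∑ j ∈ Finset.range k, childMass T ξ t j

def lexMass (T : Set (List ℕ)) (ξ : List ℕ → ℝ≥0∞) (t : List ℕ) : ℝ≥0∞ :=
  ∑' s : {s : List ℕ // s ∈ T ∧ s.length = t.length ∧ lexLt s t}, ξ s.1

lemma childMass_of_mem {t : List ℕ} {k : ℕ} (htk : t ++ [k] ∈ T) :
    childMass T ξ t k = ξ (t ++ [k]) :=
  if_pos htk

lemma leftMass_succ (t : List ℕ) (k : ℕ) :
    leftMass T ξ t (k + 1) = leftMass T ξ t k + childMass T ξ t k :=
  Finset.sum_range_succ _ _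

lemma leftMass_mono (t : List ℕ) : Monotone (leftMass T ξ t) := fun _ _ h =>
  Finset.sum_le_sum_of_subset (Finset.range_subset_range.2 h)

lemma lexMass_eq_tsum_indicator (t : List ℕ) :
    lexMass T ξ t = ∑' s, {s | s ∈ T ∧ s.length = t.length ∧ lexLt s t}.indicator ξ s :=
  tsum_subtype _ ξ

lemma lexMass_nil : lexMass T ξ [] = 0 := by
  have : IsEmpty {s : List ℕ // s ∈ T ∧ s.length = ([] : List ℕ).length ∧ lexLt s []} :=
    ⟨fun ⟨s, _, hlen, i, hi, _⟩ => by simp_all⟩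
  exact tsum_empty

open Classical in
lemma indicator_lexLt_append_singleton (t u : List ℕ) (j k : ℕ) :
    {s | s ∈ T ∧ s.length = (t ++ [k]).length ∧ lexLt s (t ++ [k])}.indicator ξ (u ++ [j]) =
      (if u.length = t.length ∧ lexLt u t then childMass T ξ u j else 0) +
        if u = t ∧ j < k then childMass T ξ t j else 0 := by
  by_cases hlen : u.length = t.length
  · simp only [indicator_apply, mem_ofPred_eq, List.length_append, hlen,
      lexLt_append_iff hlen, childMass]
    split_ifs <;> simp_all [lexLt_irrefl]
  · simp [hlen, show u ≠ t by rintro rfl; exact hlen rfl]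

lemma aT_eq_toReal_lexMass (t : List ℕ) : aT T ξ t = (lexMass T ξ t).toReal := rfl

lemma aT_nil : aT T ξ [] = 0 := by
  rw [aT_eq_toReal_lexMass, lexMass_nil, ENNReal.toReal_zero]

lemma aT_le_bT (t : List ℕ) : aT T ξ t ≤ bT T ξ t :=
  le_add_of_nonneg_right ENNReal.toReal_nonneg

namespace IsPrunedIPM

lemma tsum_childMass (h : IsPrunedIPM T ξ) (t : List ℕ) :
    ∑' k, childMass T ξ t k = T.indicator ξ t := by
  by_cases ht : t ∈ T
  · obtain ⟨k, hk⟩ := h.pruned t ht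
    rw [indicator_of_mem ht, h.isIPM.2 t ht fun hmax => hmax k hk]
    exact (tsum_subtype {k | t ++ [k] ∈ T} fun k => ξ (t ++ [k])).symm
  · rw [indicator_of_notMem ht]
    exact ENNReal.tsum_eq_zero.2 fun k => if_neg fun htk => ht (h.isTree.mem_of_append_mem htk)

lemma iSup_leftMass (h : IsPrunedIPM T ξ) {t : List ℕ} (ht : t ∈ T) :
    ⨆ k, leftMass T ξ t k = ξ t := by
  rw [← indicator_of_mem ht ξ, ← h.tsum_childMass, ENNReal.tsum_eq_iSup_nat]
  rfl

lemma leftMass_le (h : IsPrunedIPM T ξ) {t : List ℕ} (ht : t ∈ T) (k : ℕ) :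
    leftMass T ξ t k ≤ ξ t :=
  h.iSup_leftMass ht ▸ le_iSup _ k

open Classical in
lemma lexMass_append (h : IsPrunedIPM T ξ) (t : List ℕ) (k : ℕ) :
    lexMass T ξ (t ++ [k]) = lexMass T ξ t + leftMass T ξ t k := by
  have hrow : ∀ u, ∑' j, {s | s ∈ T ∧ s.length = (t ++ [k]).length ∧
        lexLt s (t ++ [k])}.indicator ξ (u ++ [j]) =
      (if u.length = t.length ∧ lexLt u t then T.indicator ξ u else 0) +
        if u = t then leftMass T ξ t k else 0 := by
    intro u
    simp_rw [indicator_lexLt_append_singleton, ENNReal.tsum_add]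
    congr 1
    · split_ifs
      exacts [h.tsum_childMass u, tsum_zero]
    · split_ifs with hu
      · simp only [hu, true_and, leftMass]
        exact (tsum_eq_sum fun j hj => if_neg (by simpa using hj)).trans
          (Finset.sum_congr rfl fun j hj => if_pos (by simpa using hj))
      · simp [hu]
  rw [lexMass_eq_tsum_indicator, tsum_eq_tsum_tsum_append_singleton _ (by simp),
    tsum_congr hrow, ENNReal.tsum_add, tsum_ite_eq, lexMass_eq_tsum_indicator]
  congr 2 with u
  simp only [indicator_apply, mem_ofPred_eq]
  split_ifs <;> tauto

lemma lexMass_add_le_one (h : IsPrunedIPM T ξ) {t : List ℕ} (ht : t ∈ T) :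
    lexMass T ξ t + ξ t ≤ 1 := by
  induction t using List.reverseRecOn with
  | nil => rw [lexMass_nil, h.isIPM.1, zero_add]
  | append_singleton t k ih =>
    have ht' := h.isTree.mem_of_append_mem ht
    calc lexMass T ξ (t ++ [k]) + ξ (t ++ [k])
        = lexMass T ξ t + leftMass T ξ t (k + 1) := by
          rw [h.lexMass_append, leftMass_succ, childMass_of_mem ht, add_assoc]
      _ ≤ lexMass T ξ t + ξ t := by gcongr; exact h.leftMass_le ht' _
      _ ≤ 1 := ih ht'

lemma lexMass_ne_top (h : IsPrunedIPM T ξ) {t : List ℕ} (ht : t ∈ T) : lexMass T ξ t ≠ ⊤ :=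
  ne_top_of_le_ne_top ENNReal.one_ne_top (le_self_add.trans (h.lexMass_add_le_one ht))

lemma ne_top (h : IsPrunedIPM T ξ) {t : List ℕ} (ht : t ∈ T) : ξ t ≠ ⊤ :=
  ne_top_of_le_ne_top ENNReal.one_ne_top (le_add_self.trans (h.lexMass_add_le_one ht))

lemma leftMass_ne_top (h : IsPrunedIPM T ξ) {t : List ℕ} (ht : t ∈ T) (k : ℕ) :
    leftMass T ξ t k ≠ ⊤ :=
  ne_top_of_le_ne_top (h.ne_top ht) (h.leftMass_le ht k)

lemma bT_nil (h : IsPrunedIPM T ξ) : bT T ξ [] = 1 := by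
  rw [bT, aT_nil, h.isIPM.1, ENNReal.toReal_one, zero_add]

lemma aT_append (h : IsPrunedIPM T ξ) {t : List ℕ} (ht : t ∈ T) (k : ℕ) :
    aT T ξ (t ++ [k]) = aT T ξ t + (leftMass T ξ t k).toReal := by
  rw [aT_eq_toReal_lexMass, h.lexMass_append,
    ENNReal.toReal_add (h.lexMass_ne_top ht) (h.leftMass_ne_top ht k), aT_eq_toReal_lexMass]

lemma bT_append (h : IsPrunedIPM T ξ) {t : List ℕ} {k : ℕ} (ht : t ∈ T)
    (htk : t ++ [k] ∈ T) : bT T ξ (t ++ [k]) = aT T ξ t + (leftMass T ξ t (k + 1)).toReal := by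
  rw [bT, h.aT_append ht, add_assoc, leftMass_succ, childMass_of_mem htk,
    ENNReal.toReal_add (h.leftMass_ne_top ht k) (h.ne_top htk)]

lemma aT_le_aT_append (h : IsPrunedIPM T ξ) {t : List ℕ} (ht : t ∈ T) (k : ℕ) :
    aT T ξ t ≤ aT T ξ (t ++ [k]) := by
  rw [h.aT_append ht]
  exact le_add_of_nonneg_right ENNReal.toReal_nonneg

lemma bT_append_le (h : IsPrunedIPM T ξ) {t : List ℕ} {k : ℕ} (ht : t ∈ T)
    (htk : t ++ [k] ∈ T) : bT T ξ (t ++ [k]) ≤ bT T ξ t := by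
  rw [h.bT_append ht htk, bT]
  gcongr
  exacts [h.ne_top ht, h.leftMass_le ht _]

lemma bT_append_le_aT_append (h : IsPrunedIPM T ξ) {t : List ℕ} {j k : ℕ} (ht : t ∈ T)
    (htj : t ++ [j] ∈ T) (hjk : j < k) : bT T ξ (t ++ [j]) ≤ aT T ξ (t ++ [k]) := by
  rw [h.bT_append ht htj, h.aT_append ht]
  gcongr
  exacts [h.leftMass_ne_top ht k, leftMass_mono t hjk]

lemma aT_map_range_mono (h : IsPrunedIPM T ξ) {x : ℕ → ℕ} (hx : x ∈ limT T) :
    Monotone fun n => aT T ξ (x ↾ n) :=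
  monotone_nat_of_le_succ fun n => by
    simpa only [map_range_succ] using h.aT_le_aT_append (hx n) (x n)

lemma bT_map_range_anti (h : IsPrunedIPM T ξ) {x : ℕ → ℕ} (hx : x ∈ limT T) :
    Antitone fun n => bT T ξ (x ↾ n) :=
  antitone_nat_of_succ_le fun n => by
    simpa only [map_range_succ] using
      h.bT_append_le (hx n) (by simpa only [map_range_succ] using hx (n + 1))

lemma aT_le_bT_map_range (h : IsPrunedIPM T ξ) {x : ℕ → ℕ} (hx : x ∈ limT T) (m n : ℕ) :
    aT T ξ (x ↾ m) ≤ bT T ξ (x ↾ n) :=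
  (le_total m n).elim (fun hmn => (h.aT_map_range_mono hx hmn).trans (aT_le_bT _))
    (fun hnm => (aT_le_bT _).trans (h.bT_map_range_anti hx hnm))

lemma fXi_le_bT (h : IsPrunedIPM T ξ) (x : limT T) (n : ℕ) :
    fXi T ξ x ≤ bT T ξ (x.1 ↾ n) :=
  ciSup_le fun m => h.aT_le_bT_map_range x.2 m n

lemma aT_le_fXi (h : IsPrunedIPM T ξ) (x : limT T) (n : ℕ) :
    aT T ξ (x.1 ↾ n) ≤ fXi T ξ x :=
  le_ciSup ⟨_, forall_mem_range.2 fun m => h.aT_le_bT_map_range x.2 m 0⟩ n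

lemma fXi_mem_Icc (h : IsPrunedIPM T ξ) (x : limT T) : fXi T ξ x ∈ Icc 0 1 := by
  constructor
  · simpa [aT_nil] using h.aT_le_fXi x 0
  · simpa [h.bT_nil] using h.fXi_le_bT x 0

lemma abs_fXi_sub_fXi_le (h : IsPrunedIPM T ξ) {x z : limT T} {n : ℕ}
    (hzx : z.1 ↾ n = x.1 ↾ n) : |fXi T ξ z - fXi T ξ x| ≤ (ξ (x.1 ↾ n)).toReal := by
  have hz₁ := h.aT_le_fXi z n
  have hz₂ := h.fXi_le_bT z n
  rw [hzx] at hz₁ hz₂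
  have hx₁ := h.aT_le_fXi x n
  have hx₂ := h.fXi_le_bT x n
  rw [bT] at hz₂ hx₂
  rw [abs_sub_le_iff]
  constructor <;> linarith

lemma exists_toReal_lt (h : IsPrunedIPM T ξ) (hfree : FreeIPM T ξ) {x : ℕ → ℕ}
    (hx : x ∈ limT T) {ε : ℝ} (hε : 0 < ε) : ∃ n, (ξ (x ↾ n)).toReal < ε := by
  have : ⨅ n, ξ (x ↾ n) < ENNReal.ofReal ε := by
    rw [hfree x hx]
    exact ENNReal.ofReal_pos.2 hε
  obtain ⟨n, hn⟩ := iInf_lt_iff.1 this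
  exact ⟨n, (ENNReal.lt_ofReal_iff_toReal_lt (h.ne_top (hx n))).1 hn⟩

lemma continuous_fXi (h : IsPrunedIPM T ξ) (hfree : FreeIPM T ξ) : Continuous (fXi T ξ) := by
  refine Metric.continuous_iff'.2 fun x ε hε => ?_
  obtain ⟨n, hn⟩ := h.exists_toReal_lt hfree x.2 hε
  filter_upwards [eventually_map_range_eq x n] with z hz
  exact (h.abs_fXi_sub_fXi_le hz).trans_lt hn

lemma exists_append_mem_Ico (h : IsPrunedIPM T ξ) {t : List ℕ} (ht : t ∈ T) {y : ℝ}
    (hy : y ∈ Ico (aT T ξ t) (bT T ξ t)) :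
    ∃ k, t ++ [k] ∈ T ∧ y ∈ Ico (aT T ξ (t ++ [k])) (bT T ξ (t ++ [k])) := by
  classical
  obtain ⟨hay, hyb⟩ := hy
  have hex : ∃ m, y - aT T ξ t < (leftMass T ξ t m).toReal := by
    have : ENNReal.ofReal (y - aT T ξ t) < ⨆ m, leftMass T ξ t m := by
      rw [h.iSup_leftMass ht, ENNReal.ofReal_lt_iff_lt_toReal (by linarith) (h.ne_top ht)]
      rw [bT] at hyb
      linarith
    obtain ⟨m, hm⟩ := lt_iSup_iff.1 this
    exact ⟨m, (ENNReal.ofReal_lt_iff_lt_toReal (by linarith) (h.leftMass_ne_top ht m)).1 hm⟩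
  -- the child containing `y` is the first `k` with `y - a_t < ∑_{j ≤ k} ξ(t ++ [j])`
  obtain ⟨k, hk⟩ : ∃ k, Nat.find hex = k + 1 := by
    refine Nat.exists_eq_add_one.2 (Nat.pos_of_ne_zero fun h0 => ?_)
    have := Nat.find_spec hex
    rw [h0, leftMass, Finset.sum_range_zero, ENNReal.toReal_zero] at this
    linarith
  have hlt : y - aT T ξ t < (leftMass T ξ t (k + 1)).toReal := hk ▸ Nat.find_spec hex
  have hle : (leftMass T ξ t k).toReal ≤ y - aT T ξ t :=
    not_lt.1 (Nat.find_min hex (by omega))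
  have htk : t ++ [k] ∈ T := by
    by_contra htk
    rw [leftMass_succ, childMass, if_neg htk, add_zero] at hlt
    linarith
  refine ⟨k, htk, ?_, ?_⟩
  · rw [h.aT_append ht]
    linarith
  · rw [h.bT_append ht htk]
    linarith

lemma Ico_subset_range_fXi (h : IsPrunedIPM T ξ) (hfree : FreeIPM T ξ) :
    Ico 0 1 ⊆ range (fXi T ξ) := by
  intro y hy
  obtain ⟨x, hx⟩ := exists_forall_map_range_of_forall_exists_append
    (P := fun t => t ∈ T ∧ y ∈ Ico (aT T ξ t) (bT T ξ t))
    ⟨h.isTree.nil_mem, by rwa [aT_nil, h.bT_nil]⟩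
    fun t ht => h.exists_append_mem_Ico ht.1 ht.2
  have hxT : x ∈ limT T := fun n => (hx n).1
  refine ⟨⟨x, hxT⟩, le_antisymm (ciSup_le fun n => (hx n).2.1) ?_⟩
  refine le_of_forall_pos_lt_add fun ε hε => ?_
  obtain ⟨n, hn⟩ := h.exists_toReal_lt hfree hxT hε
  calc y < bT T ξ (x ↾ n) := (hx n).2.2
    _ < fXi T ξ ⟨x, hxT⟩ + ε := by
      rw [bT]
      linarith [h.aT_le_fXi ⟨x, hxT⟩ n]

lemma map_range_eq_of_fXi_mem_Ioo (h : IsPrunedIPM T ξ) {x z : limT T} {n : ℕ}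
    (hz : fXi T ξ z ∈ Ioo (aT T ξ (x.1 ↾ n)) (bT T ξ (x.1 ↾ n))) : z.1 ↾ n = x.1 ↾ n := by
  induction n with
  | zero => rfl
  | succ n ih =>
    have hzn : z.1 ↾ n = x.1 ↾ n := ih ⟨(h.aT_map_range_mono x.2 n.le_succ).trans_lt hz.1,
      hz.2.trans_le (h.bT_map_range_anti x.2 n.le_succ)⟩
    have hzT : x.1 ↾ n ++ [z.1 n] ∈ T := by
      rw [← hzn, ← map_range_succ]
      exact z.2 (n + 1)
    have hxT : x.1 ↾ n ++ [x.1 n] ∈ T := by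
      rw [← map_range_succ]
      exact x.2 (n + 1)
    have hz₁ := h.aT_le_fXi z (n + 1)
    have hz₂ := h.fXi_le_bT z (n + 1)
    rw [map_range_succ, hzn] at hz₁ hz₂ ⊢
    rw [map_range_succ] at hz ⊢
    obtain hlt | heq | hgt := lt_trichotomy (z.1 n) (x.1 n)
    · linarith [hz.1, h.bT_append_le_aT_append (x.2 n) hzT hlt]
    · rw [heq]
    · linarith [hz.2, h.bT_append_le_aT_append (x.2 n) hxT hgt]

lemma fXi_mem_Ioo (h : IsPrunedIPM T ξ) {x : limT T} (hx : fXi T ξ x ∉ Qxi T ξ) (n : ℕ) :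
    fXi T ξ x ∈ Ioo (aT T ξ (x.1 ↾ n)) (bT T ξ (x.1 ↾ n)) :=
  ⟨(h.aT_le_fXi x n).lt_of_ne fun hax => hx (Or.inl ⟨_, x.2 n, hax.symm⟩),
    (h.fXi_le_bT x n).lt_of_ne fun hxb => hx (Or.inr ⟨_, x.2 n, hxb⟩)⟩

lemma eq_of_fXi_eq (h : IsPrunedIPM T ξ) {x z : limT T} (hx : fXi T ξ x ∉ Qxi T ξ)
    (hzx : fXi T ξ z = fXi T ξ x) : z = x :=
  Subtype.ext <| funext fun m => apply_eq_of_map_range_eq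
    (h.map_range_eq_of_fXi_mem_Ioo (hzx ▸ h.fXi_mem_Ioo hx (m + 1))) m.lt_succ_self

lemma eventually_map_range_eq_of_fXi_eq (h : IsPrunedIPM T ξ) {x : limT T}
    (hx : fXi T ξ x ∉ Qxi T ξ) (n : ℕ) :
    ∀ᶠ y in 𝓝 (fXi T ξ x), ∀ z : limT T, fXi T ξ z = y → z.1 ↾ n = x.1 ↾ n := by
  filter_upwards [Ioo_mem_nhds (h.fXi_mem_Ioo hx n).1 (h.fXi_mem_Ioo hx n).2] with y hy z hzy
  exact h.map_range_eq_of_fXi_mem_Ioo (hzy ▸ hy)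

def fXiRestrict (h : IsPrunedIPM T ξ) (x : {x : limT T // fXi T ξ x ∉ Qxi T ξ}) :
    ↥(Icc (0 : ℝ) 1 \ Qxi T ξ) :=
  ⟨fXi T ξ x.1, h.fXi_mem_Icc x.1, x.2⟩

lemma bijective_fXiRestrict (h : IsPrunedIPM T ξ) (hfree : FreeIPM T ξ) :
    Function.Bijective h.fXiRestrict := by
  refine ⟨fun x z hxz => Subtype.ext (h.eq_of_fXi_eq z.2 (congrArg Subtype.val hxz)), ?_⟩
  rintro ⟨y, ⟨hy₀, hy₁⟩, hyQ⟩
  have hy₁' : y < 1 := hy₁.lt_of_ne fun hy =>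
    hyQ (Or.inr ⟨[], h.isTree.nil_mem, hy.trans h.bT_nil.symm⟩)
  obtain ⟨x, hx⟩ := h.Ico_subset_range_fXi hfree ⟨hy₀, hy₁'⟩
  exact ⟨⟨x, hx ▸ hyQ⟩, Subtype.ext hx⟩

lemma continuous_fXiRestrict (h : IsPrunedIPM T ξ) (hfree : FreeIPM T ξ) :
    Continuous h.fXiRestrict :=
  ((h.continuous_fXi hfree).comp continuous_subtype_val).subtype_mk _

def fXiHomeomorph (h : IsPrunedIPM T ξ) (hfree : FreeIPM T ξ) :
    {x : limT T // fXi T ξ x ∉ Qxi T ξ} ≃ₜ ↥(Icc (0 : ℝ) 1 \ Qxi T ξ) where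
  toEquiv := Equiv.ofBijective _ (h.bijective_fXiRestrict hfree)
  continuous_toFun := h.continuous_fXiRestrict hfree
  continuous_invFun := by
    set e := Equiv.ofBijective _ (h.bijective_fXiRestrict hfree)
    have he : ∀ r, fXi T ξ (e.symm r).1 = r.1 := fun r =>
      congrArg Subtype.val (e.apply_symm_apply r)
    refine (continuous_iff_continuousAt.2 fun r => ?_).subtype_mk _
    refine continuousAt_of_eventually_map_range_eq fun n => ?_
    have := h.eventually_map_range_eq_of_fXi_eq (e.symm r).2 n
    rw [he] at this
    filter_upwards [continuous_subtype_val.continuousAt.eventually this] with r' hr'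
    exact hr' _ (he r')

end IsPrunedIPM

theorem stmt15 (T : Set (List ℕ)) (ξ : List ℕ → ℝ≥0∞)
    (hT : IsTree T) (hpr : Pruned T) (hξ : IsIPM T ξ) (hfree : FreeIPM T ξ) :
    Continuous (fXi T ξ) ∧
    Set.Ico (0 : ℝ) 1 ⊆ Set.range (fXi T ξ) ∧
    ∃ e : {x : ↥(limT T) // fXi T ξ x ∉ Qxi T ξ} ≃ₜ ↥(Set.Icc (0 : ℝ) 1 \ Qxi T ξ),
      ∀ x : {x : ↥(limT T) // fXi T ξ x ∉ Qxi T ξ}, (e x).1 = fXi T ξ x.1 := by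
  have h : IsPrunedIPM T ξ := ⟨hT, hpr, hξ⟩
  exact ⟨h.continuous_fXi hfree, h.Ico_subset_range_fXi hfree, h.fXiHomeomorph hfree,
    fun _ => rfl⟩
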